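/- Let q, α ∈ (0,1), let n0 be an integer, and let y : ℤ → ℝ encode a function on T_q. Suppose y(n0) ≥ 0 and y is increasing, i.e. y(n−1) ≥ y(n) for every integer n ≤ n0. Then S_y(n) − S_y(n+1) ≥ 0 for every integer n < n0 (i.e. the Riemann q-fractional derivative (_q∇_{qa}^{α} y)(q^n) of order α based at qa, a = q^{n0}, is nonnegative at every point t = q^n with n < n0). -/

import Mathlib

/-!
Write `P d = ∏_{j ≥ 0} (1 - q^(d+j)) / (1 - q^(d+j-α))` (`qFacProd`), so that
`(q^m - q^k)_q^{-α} = q^(-mα) P (k - m)`.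
Peeling off the first factor gives `(1 - q^(d-α)) P d = (1 - q^d) P (d + 1)`, and at `d = 0` the
vanishing first factor forces `P 0 = 0`. Hence
`S_y(n) - S_y(n+1) = Σ_{i=n}^{n0} (C (i+1) - C i) y(i)` with `C i = q^(n(1-α)) P (i - n) ≥ 0`
and `C n = 0`, and summation by parts turns this into
`C (n0+1) y(n0) + Σ_{n<i≤n0} C i (y(i-1) - y(i))`, a sum of nonnegative terms.
-/

/-- The q-factorial power `(q^m - q^k)_q^{-α}` for integers `m < k`, defined by the
convergent infinite product
`q^{-mα} · ∏_{j=0}^∞ (1 - q^{k-m+j}) / (1 - q^{k-m+j-α})`. -/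
noncomputable def qFac (q α : ℝ) (m k : ℤ) : ℝ :=
  q ^ (-(m : ℝ) * α) *
    ∏' j : ℕ, (1 - q ^ (((k - m : ℤ) : ℝ) + (j : ℝ))) /
      (1 - q ^ (((k - m : ℤ) : ℝ) + (j : ℝ) - α))

/-- `S q α n0 y n = Σ_{i=n}^{n0} q^i (q^n - q^{i+1})_q^{-α} y(i)`; for `n = n0 + 1`
the range is empty, so `S q α n0 y (n0+1) = 0`.  The Riemann q-fractional derivative
of order `α` based at `qa = q^{n0+1}`, evaluated at `t = q^n`, is
`(S q α n0 y n - S q α n0 y (n+1)) / ((1-q) q^n Γ_q(1-α))`,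
whose sign is that of `S q α n0 y n - S q α n0 y (n+1)`. -/
noncomputable def S (q α : ℝ) (n0 : ℤ) (y : ℤ → ℝ) (n : ℤ) : ℝ :=
  ∑ i ∈ Finset.Icc n n0, q ^ (i : ℝ) * qFac q α n (i + 1) * y i

open Finset

lemma mul_sub_mul_le_sum_Icc_sub_mul (C y : ℤ → ℝ) {n N : ℤ} (hnN : n ≤ N)
    (hC : ∀ i, n < i → i ≤ N → 0 ≤ C i)
    (hy : ∀ i, n < i → i ≤ N → y i ≤ y (i - 1)) :
    C (N + 1) * y N - C n * y n ≤ ∑ i ∈ Icc n N, (C (i + 1) - C i) * y i := by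
  induction N, hnN using Int.leInduction with
  | base => simp only [Icc_self, sum_singleton]; linarith
  | succ N hnN ih =>
    rw [← insert_Icc_right_eq_Icc_add_one (by omega), sum_insert (by simp)]
    have hCN : 0 ≤ C (N + 1) := hC (N + 1) (by omega) le_rfl
    have hyN : y (N + 1) ≤ y N := by simpa using hy (N + 1) (by omega) le_rfl
    have ih' := ih (fun i h1 _ => hC i h1 (by omega)) (fun i h1 _ => hy i h1 (by omega))
    nlinarith [mul_le_mul_of_nonneg_left hyN hCN]

noncomputable def qFacProd (q α d : ℝ) : ℝ :=
  ∏' j : ℕ, (1 - q ^ (d + j)) / (1 - q ^ (d + j - α))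

lemma qFac_eq_rpow_mul_qFacProd (q α : ℝ) (m k : ℤ) :
    qFac q α m k = q ^ (-(m : ℝ) * α) * qFacProd q α ((k - m : ℤ) : ℝ) := rfl

section qFacProd

variable {q α d : ℝ}

lemma multipliable_one_sub_rpow_div_one_sub_rpow (hq0 : 0 < q) (hq1 : q < 1) (hα : 0 ≤ α)
    (hd : α < d) :
    Multipliable fun j : ℕ => (1 - q ^ (d + j)) / (1 - q ^ (d + j - α)) := by
  have hden : ∀ j : ℕ, 1 - q ^ (d - α) ≤ 1 - q ^ (d + j - α) := fun j => by
    have := Real.rpow_le_rpow_of_exponent_ge hq0 hq1.le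
      (show d - α ≤ d + j - α by linarith [j.cast_nonneg (α := ℝ)])
    linarith
  have hden0 : 0 < 1 - q ^ (d - α) := sub_pos.2 (Real.rpow_lt_one hq0.le hq1 (by linarith))
  -- each factor is `1 + g j`, and `g` is dominated by a geometric series
  set g : ℕ → ℝ := fun j => (q ^ (d + j - α) - q ^ (d + j)) / (1 - q ^ (d + j - α))
  have hg : Summable g := by
    refine Summable.of_nonneg_of_le (fun j => div_nonneg ?_ (hden0.trans_le (hden j)).le)
      (fun j => ?_) ((summable_geometric_of_lt_one hq0.le hq1).mul_left
        (q ^ (d - α) / (1 - q ^ (d - α))))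
    · exact sub_nonneg.2 (Real.rpow_le_rpow_of_exponent_ge hq0 hq1.le (by linarith))
    · calc g j ≤ q ^ (d + j - α) / (1 - q ^ (d - α)) :=
            div_le_div₀ (by positivity) (by linarith [Real.rpow_pos_of_pos hq0 (d + j)])
              hden0 (hden j)
        _ = q ^ (d - α) / (1 - q ^ (d - α)) * q ^ j := by
            rw [show d + j - α = d - α + j by ring, Real.rpow_add hq0, Real.rpow_natCast]
            ring
  refine (Real.multipliable_one_add_of_summable hg).congr fun j => ?_
  have : 1 - q ^ (d + j - α) ≠ 0 := (hden0.trans_le (hden j)).ne'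
  simp only [g]
  field_simp
  ring

lemma qFacProd_eq_mul_qFacProd_add_one (hq0 : 0 < q) (hq1 : q < 1) (hα : 0 ≤ α)
    (hd : α < d + 1) :
    qFacProd q α d = (1 - q ^ d) / (1 - q ^ (d - α)) * qFacProd q α (d + 1) := by
  have htail := multipliable_one_sub_rpow_div_one_sub_rpow hq0 hq1 hα hd
  rw [qFacProd, tprod_eq_zero_mul' ?_]
  · simp [qFacProd, add_assoc, add_comm (1 : ℝ)]
  · refine htail.congr fun j => ?_
    simp [add_assoc, add_comm (1 : ℝ)]

lemma qFacProd_zero (hq0 : 0 < q) (hq1 : q < 1) (hα0 : 0 ≤ α) (hα1 : α < 1) :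
    qFacProd q α 0 = 0 := by
  rw [qFacProd_eq_mul_qFacProd_add_one hq0 hq1 hα0 (by linarith)]
  simp

lemma qFacProd_nonneg (hq0 : 0 < q) (hq1 : q < 1) (hd0 : 0 ≤ d) (hd : α ≤ d) :
    0 ≤ qFacProd q α d :=
  tprod_nonneg fun j => div_nonneg
    (sub_nonneg.2 (Real.rpow_le_one hq0.le hq1.le (by positivity)))
    (sub_nonneg.2 (Real.rpow_le_one hq0.le hq1.le (by linarith [j.cast_nonneg (α := ℝ)])))

lemma one_sub_rpow_sub_mul_qFacProd (hq0 : 0 < q) (hq1 : q < 1) (hα : 0 ≤ α)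
    (hd : α < d + 1) (hdα : d ≠ α) :
    (1 - q ^ (d - α)) * qFacProd q α d = (1 - q ^ d) * qFacProd q α (d + 1) := by
  have hne : 1 - q ^ (d - α) ≠ 0 := fun h => by
    have := (Real.rpow_right_inj hq0 hq1.ne).1
      ((sub_eq_zero.1 h).symm.trans (Real.rpow_zero q).symm)
    exact hdα (by linarith)
  rw [qFacProd_eq_mul_qFacProd_add_one hq0 hq1 hα hd]
  field_simp

end qFacProd

section qFac

variable {q α : ℝ}

lemma qFac_self (hq0 : 0 < q) (hq1 : q < 1) (hα0 : 0 ≤ α) (hα1 : α < 1) (m : ℤ) :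
    qFac q α m m = 0 := by
  simp [qFac_eq_rpow_mul_qFacProd, qFacProd_zero hq0 hq1 hα0 hα1]

lemma rpow_mul_qFac_sub_rpow_mul_qFac (hq0 : 0 < q) (hq1 : q < 1) (hα0 : 0 < α)
    (hα1 : α < 1) {n i : ℤ} (hni : n ≤ i) :
    q ^ (i : ℝ) * qFac q α n (i + 1) - q ^ (i : ℝ) * qFac q α (n + 1) (i + 1) =
      q ^ ((n : ℝ) * (1 - α)) *
        (qFacProd q α ((i + 1 - n : ℤ) : ℝ) - qFacProd q α ((i - n : ℤ) : ℝ)) := by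
  obtain ⟨d, rfl⟩ := Int.le.dest hni
  have hdα : (d : ℝ) ≠ α := by
    rcases d with _ | d
    · simpa using hα0.ne
    · push_cast; linarith [d.cast_nonneg (α := ℝ)]
  have key := one_sub_rpow_sub_mul_qFacProd hq0 hq1 hα0.le
    (by linarith [d.cast_nonneg (α := ℝ)]) hdα
  simp only [qFac_eq_rpow_mul_qFacProd]
  have e1 : (((n + d : ℤ) + 1 - n : ℤ) : ℝ) = d + 1 := by push_cast; ring
  have e2 : (((n + d : ℤ) + 1 - (n + 1) : ℤ) : ℝ) = d := by push_cast; ring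
  have e3 : (((n + d : ℤ) - n : ℤ) : ℝ) = d := by push_cast; ring
  rw [e1, e2, e3]
  have p1 : q ^ (((n + d : ℤ)) : ℝ) = q ^ (n : ℝ) * q ^ (d : ℝ) := by
    push_cast; exact Real.rpow_add hq0 _ _
  have p2 : q ^ (-(((n + 1 : ℤ)) : ℝ) * α) = q ^ (-(n : ℝ) * α) * q ^ (-α) := by
    rw [← Real.rpow_add hq0]; push_cast; ring_nf
  have p3 : q ^ ((n : ℝ) * (1 - α)) = q ^ (n : ℝ) * q ^ (-(n : ℝ) * α) := by
    rw [← Real.rpow_add hq0]; ring_nf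
  have p4 : q ^ ((d : ℝ) - α) = q ^ (d : ℝ) * q ^ (-α) := by
    rw [← Real.rpow_add hq0]; ring_nf
  rw [p1, p2, p3]
  rw [p4] at key
  linear_combination (q ^ (n : ℝ) * q ^ (-(n : ℝ) * α)) * key

lemma S_sub_S_add_one (hq0 : 0 < q) (hq1 : q < 1) (hα0 : 0 < α) (hα1 : α < 1) {n0 n : ℤ}
    (y : ℤ → ℝ) (hn : n ≤ n0) :
    S q α n0 y n - S q α n0 y (n + 1) = ∑ i ∈ Icc n n0, q ^ ((n : ℝ) * (1 - α)) *
      (qFacProd q α ((i + 1 - n : ℤ) : ℝ) - qFacProd q α ((i - n : ℤ) : ℝ)) * y i := by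
  have hS : S q α n0 y (n + 1) =
      ∑ i ∈ Icc n n0, q ^ (i : ℝ) * qFac q α (n + 1) (i + 1) * y i := by
    rw [S, ← insert_Icc_add_one_left_eq_Icc hn, sum_insert (by simp),
      qFac_self hq0 hq1 hα0.le hα1, mul_zero, zero_mul, zero_add]
  rw [hS, S, ← sum_sub_distrib]
  refine sum_congr rfl fun i hi => ?_
  rw [← rpow_mul_qFac_sub_rpow_mul_qFac hq0 hq1 hα0 hα1 (mem_Icc.1 hi).1]
  ring

end qFac

/-- If `y(a) ≥ 0` (with `a = q^{n0}`) and `y` is increasing on `T_q`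
(i.e. `y(q^{n-1}) ≥ y(q^n)`, since `q^n` decreases as `n` increases), then the
Riemann q-fractional derivative of order `α ∈ (0,1)` based at `qa` is nonnegative
at every `t = q^n`, `n < n0`. -/
theorem qFrac_nonneg_of_increasing (q α : ℝ) (hq0 : 0 < q) (hq1 : q < 1)
    (hα0 : 0 < α) (hα1 : α < 1) (n0 : ℤ) (y : ℤ → ℝ)
    (hy : 0 ≤ y n0)
    (hinc : ∀ n : ℤ, n ≤ n0 → y n ≤ y (n - 1)) :
    ∀ n : ℤ, n < n0 → 0 ≤ S q α n0 y n - S q α n0 y (n + 1) := by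
  intro n hn
  set C : ℤ → ℝ := fun i => q ^ ((n : ℝ) * (1 - α)) * qFacProd q α ((i - n : ℤ) : ℝ)
  have hC : ∀ i, n < i → 0 ≤ C i := fun i hi => by
    have h1 : (1 : ℝ) ≤ ((i - n : ℤ) : ℝ) := by exact_mod_cast (by omega : 1 ≤ i - n)
    exact mul_nonneg (by positivity) (qFacProd_nonneg hq0 hq1 (by linarith) (by linarith))
  have hCn : C n = 0 := by simp [C, qFacProd_zero hq0 hq1 hα0.le hα1]
  calc 0 ≤ C (n0 + 1) * y n0 - C n * y n := by
        rw [hCn, zero_mul, sub_zero]; exact mul_nonneg (hC _ (by omega)) hy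
    _ ≤ ∑ i ∈ Icc n n0, (C (i + 1) - C i) * y i :=
        mul_sub_mul_le_sum_Icc_sub_mul C y hn.le (fun i h _ => hC i h)
          (fun i _ h => hinc i h)
    _ = S q α n0 y n - S q α n0 y (n + 1) := by
        rw [S_sub_S_add_one hq0 hq1 hα0 hα1 y hn.le]
        refine sum_congr rfl fun i _ => ?_
        simp only [C]
        ring
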